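/- arXiv:1905.13193 — 2 statements merged into one kernel-verified Lean document; each statement's English description precedes it below -/
import Mathlib

section
/- For all real numbers a > 0 and b > 0, (log b − log a)² ≤ (b − a)²/(a·b). -/
/-! With `x = (log b - log a) / 2` the right-hand side equals `4 sinh² x`, and `|x| ≤ |sinh x|`. -/

open Real

lemma sq_le_sinh_sq (x : ℝ) : x ^ 2 ≤ sinh x ^ 2 := by
  rw [sq_le_sq, abs_sinh]
  exact self_le_sinh_iff.mpr (abs_nonneg x)

lemma four_mul_sinh_sq_half (x : ℝ) : 4 * sinh (x / 2) ^ 2 = exp x + exp (-x) - 2 := by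
  have hx : exp x = exp (x / 2) ^ 2 := by rw [sq, ← exp_add, add_halves]
  rw [sinh_eq, exp_neg, exp_neg, hx]
  field_simp
  ring

lemma sub_sq_div_mul_eq_four_mul_sinh_sq {a b : ℝ} (ha : 0 < a) (hb : 0 < b) :
    (b - a) ^ 2 / (a * b) = 4 * sinh ((log b - log a) / 2) ^ 2 := by
  rw [four_mul_sinh_sq_half, exp_neg, exp_sub, exp_log ha, exp_log hb]
  field_simp
  ring

/-- For all real numbers `a > 0` and `b > 0`, `(log b - log a)² ≤ (b - a)² / (a * b)`. -/
theorem stmt_11 (a b : ℝ) (ha : 0 < a) (hb : 0 < b) :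
    (Real.log b - Real.log a) ^ 2 ≤ (b - a) ^ 2 / (a * b) := by
  calc (Real.log b - Real.log a) ^ 2 = 4 * ((Real.log b - Real.log a) / 2) ^ 2 := by ring
    _ ≤ 4 * sinh ((Real.log b - Real.log a) / 2) ^ 2 :=
      mul_le_mul_of_nonneg_left (sq_le_sinh_sq _) zero_le_four
    _ = (b - a) ^ 2 / (a * b) := (sub_sq_div_mul_eq_four_mul_sinh_sq ha hb).symm
end

section
/- For all real numbers a, b, c, d with a·b < 0, the inequality (a + b)·(c²/a + d²/b) ≤ (c − d)² holds. -/
/-- For all real numbers `a, b, c, d` with `a·b < 0`,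
`(a + b)·(c²/a + d²/b) ≤ (c - d)²`. -/
theorem stmt_12 (a b c d : ℝ) (hab : a * b < 0) :
    (a + b) * (c ^ 2 / a + d ^ 2 / b) ≤ (c - d) ^ 2 := by
  have ha : a ≠ 0 := by rintro rfl; simp at hab
  have hb : b ≠ 0 := by rintro rfl; simp at hab
  have key : (c - d) ^ 2 - (a + b) * (c ^ 2 / a + d ^ 2 / b)
      = -((b * c + a * d) ^ 2) / (a * b) := by
    field_simp
    ring
  have h2 : -((b * c + a * d) ^ 2) / (a * b) ≥ 0 :=
    div_nonneg_of_nonpos (neg_nonpos.mpr (sq_nonneg _)) hab.le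
  linarith
end
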